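/- Let {V(s) : s ≥ 0} be a locally a.s. bounded C-semigroup on a complete RN module X with generator (A, D(A)). Then for every z ∈ D(A) and every l > 0, the supremum ⋁_{s∈(0,l]} ‖C A_s z‖ belongs to L⁰₊(F), where A_s = (V(s) - C)/s; indeed ‖C A_s z‖ ≤ (⋁_{t∈[0,2s]} ‖V(t)‖)·‖CAz‖ for every s > 0. -/

import Mathlib

open MeasureTheory Filter Set
noncomputable section

/-- A random normed module (RN module) over ℝ with base `(Ω, F, P)`:
an `L⁰(F,ℝ)`-module `X` together with an `L⁰`-norm. The `L⁰(F,ℝ)`-scalar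
multiplication is bundled as the field `smul`. -/
structure RNModuleStr {Ω : Type*} [MeasurableSpace Ω] (P : Measure Ω)
    (X : Type*) [AddCommGroup X] where
  smul : (Ω →ₘ[P] ℝ) → X → X
  nrm : X → Ω →ₘ[P] ℝ
  one_smul' : ∀ x, smul 1 x = x
  mul_smul' : ∀ ξ η x, smul (ξ * η) x = smul ξ (smul η x)
  smul_add' : ∀ ξ x y, smul ξ (x + y) = smul ξ x + smul ξ y
  add_smul' : ∀ ξ η x, smul (ξ + η) x = smul ξ x + smul η x
  nrm_nonneg : ∀ x, 0 ≤ nrm x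
  nrm_smul : ∀ ξ x, nrm (smul ξ x) = |ξ| * nrm x
  nrm_add_le : ∀ x y, nrm (x + y) ≤ nrm x + nrm y
  nrm_eq_zero : ∀ x, nrm x = 0 → x = 0

namespace RNModuleStr

variable {Ω : Type*} [MeasurableSpace Ω] {P : Measure Ω} {X : Type*} [AddCommGroup X]

/-- Scalar multiplication by a real constant (viewed as a constant random variable). -/
def rsmul (M : RNModuleStr P X) (c : ℝ) (x : X) : X :=
  M.smul (AEEqFun.const Ω c) x

/-- Convergence in the `(ε,λ)`-topology of an RN module, i.e. convergence in
probability of the `L⁰`-norms of the differences, along an arbitrary filter. -/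
def TendstoRN (M : RNModuleStr P X) {ι : Type*} (f : ι → X) (l : Filter ι) (x : X) : Prop :=
  ∀ ε : ℝ, 0 < ε → Tendsto (fun i => P {ω : Ω | ε ≤ M.nrm (f i - x) ω}) l (nhds 0)

/-- Sequential continuity of a map between RN modules; in the metrizable
`(ε,λ)`-topology this is equivalent to continuity. -/
def RNContinuousMap {Y : Type*} [AddCommGroup Y] (M : RNModuleStr P X)
    (N : RNModuleStr P Y) (T : X → Y) : Prop :=
  ∀ (u : ℕ → X) (x : X), M.TendstoRN u atTop x → N.TendstoRN (fun n => T (u n)) atTop (T x)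

/-- `T : X → Y` is a module homomorphism of `L⁰`-modules. -/
def IsModuleHom {Y : Type*} [AddCommGroup Y] (M : RNModuleStr P X)
    (N : RNModuleStr P Y) (T : X → Y) : Prop :=
  (∀ x y : X, T (x + y) = T x + T y) ∧ ∀ (ξ : Ω →ₘ[P] ℝ) (x : X), T (M.smul ξ x) = N.smul ξ (T x)

/-- `T` is almost surely bounded: `‖Tz‖ ≤ η ‖z‖` for some `η ∈ L⁰₊`. -/
def ASBounded {Y : Type*} [AddCommGroup Y] (M : RNModuleStr P X)
    (N : RNModuleStr P Y) (T : X → Y) : Prop :=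
  ∃ η : Ω →ₘ[P] ℝ, 0 ≤ η ∧ ∀ x : X, N.nrm (T x) ≤ η * M.nrm x

/-- Riemann sum over the uniform partition of `[a,b]` into `n` pieces. -/
def rsum (M : RNModuleStr P X) (f : ℝ → X) (a b : ℝ) (n : ℕ) : X :=
  ∑ i ∈ Finset.range n, M.rsmul ((b - a) / n) (f (a + (b - a) * i / n))

/-- `y` is the Riemann integral `∫ₐᵇ f(u) du` in the complete RN module `X`
(limit in the `(ε,λ)`-topology of the uniform Riemann sums). -/
def IsIntegral (M : RNModuleStr P X) (f : ℝ → X) (a b : ℝ) (y : X) : Prop :=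
  M.TendstoRN (fun n => M.rsum f a b n) atTop y

/-- The family `{V(s) : s ≥ 0}` is locally a.s. bounded:
`⋁_{s∈[0,l]} ‖V(s)‖ ∈ L⁰₊(F)` for every `l > 0`. -/
def LocASBounded (M : RNModuleStr P X) (V : ℝ → X → X) : Prop :=
  ∀ l : ℝ, 0 < l → ∃ η : Ω →ₘ[P] ℝ, 0 ≤ η ∧
    ∀ s ∈ Icc (0:ℝ) l, ∀ x : X, M.nrm (V s x) ≤ η * M.nrm x

/-- `{V(s) : s ≥ 0}` is a `C`-semigroup on the RN module `X`. -/
structure IsCSemigroup (M : RNModuleStr P X) (V : ℝ → X → X) (C : X → X) : Prop where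
  C_hom : M.IsModuleHom M C
  C_bdd : ASBounded M M C
  C_inj : Function.Injective C
  V_hom : ∀ s : ℝ, 0 ≤ s → M.IsModuleHom M (V s)
  V_bdd : ∀ s : ℝ, 0 ≤ s → ASBounded M M (V s)
  strong_cont : ∀ (z : X) (t : ℝ), 0 ≤ t →
    M.TendstoRN (fun s => V s z) (nhdsWithin t (Ici 0)) (V t z)
  V_zero : V 0 = C
  C_V : ∀ s t : ℝ, 0 ≤ s → 0 ≤ t → ∀ z : X, C (V (s + t) z) = V s (V t z)

/-- `(A, DA)` is the generator of the `C`-semigroup `{V(s) : s ≥ 0}`: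
`DA = {z : lim_{s↓0} (V(s)z - Cz)/s exists and lies in R(C)}` and
`Az = C⁻¹ lim_{s↓0} (V(s)z - Cz)/s`. -/
structure IsGenerator (M : RNModuleStr P X) (V : ℝ → X → X) (C : X → X)
    (DA : Set X) (A : X → X) : Prop where
  mem_iff : ∀ z : X, z ∈ DA ↔ ∃ w : X,
    M.TendstoRN (fun s => M.rsmul s⁻¹ (V s z - C z)) (nhdsWithin 0 (Ioi 0)) (C w)
  spec : ∀ z ∈ DA,
    M.TendstoRN (fun s => M.rsmul s⁻¹ (V s z - C z)) (nhdsWithin 0 (Ioi 0)) (C (A z))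

/-- `{V(s) : s ≥ 0}` is a mild `C`-existence family for the module homomorphism
`A` with domain `DA`. -/
structure IsMildCExistenceFamily (M : RNModuleStr P X) (V : ℝ → X → X) (C : X → X)
    (DA : Set X) (A : X → X) : Prop where
  V_hom : ∀ s : ℝ, 0 ≤ s → M.IsModuleHom M (V s)
  locBdd : M.LocASBounded V
  strong_cont : ∀ (z : X) (t : ℝ), 0 ≤ t →
    M.TendstoRN (fun s => V s z) (nhdsWithin t (Ici 0)) (V t z)
  integral_mem : ∀ (z : X) (s : ℝ), 0 ≤ s → ∃ y : X,
    M.IsIntegral (fun u => V u z) 0 s y ∧ y ∈ DA ∧ A y = V s z - C z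

/-- `A` (with domain `DA`) is a closed module homomorphism: its graph is closed
in the `(ε,λ)`-topology. -/
def IsClosedOperator (M : RNModuleStr P X) (DA : Set X) (A : X → X) : Prop :=
  ∀ (u : ℕ → X) (z y : X), (∀ n, u n ∈ DA) →
    M.TendstoRN u atTop z → M.TendstoRN (fun n => A (u n)) atTop y →
    z ∈ DA ∧ A z = y

end RNModuleStr

open RNModuleStr

/-! The semigroup law telescopes `C(V(s)z - Cz)` into `∑_{i<m} V(is/m)(V(s/m)z - Cz)`, so
`‖C A_s z‖ ≤ η ‖A_{s/m} z‖` for every a.s. bound `η` of `V` on `[0, s]`. As `m → ∞`,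
`A_{s/m} z → CAz` in probability, hence almost surely along a subsequence, and the estimate
passes to the limit: `‖C A_s z‖ ≤ η ‖CAz‖`. For the second part, the infimum of the a.s. bounds
of `V(t)` is again an a.s. bound, so their supremum `W` over `[0, 2s]` bounds every `V(t)` with
`t ∈ [0, s]`. -/

namespace MeasureTheory.AEEqFun

variable {Ω : Type*} [MeasurableSpace Ω] {P : Measure Ω}

theorem le_mul_iff_ae {a b c : Ω →ₘ[P] ℝ} : a ≤ b * c ↔ ∀ᵐ ω ∂P, a ω ≤ b ω * c ω := by
  rw [← coeFn_le]
  exact eventually_congr <| (coeFn_mul b c).mono fun ω h => by rw [h, Pi.mul_apply]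

theorem nonneg_iff_ae {a : Ω →ₘ[P] ℝ} : 0 ≤ a ↔ ∀ᵐ ω ∂P, 0 ≤ a ω := by
  rw [← coeFn_le]
  exact eventually_congr <| (coeFn_zero (β := ℝ) (μ := P)).mono fun ω h => by rw [h, Pi.zero_apply]

instance : MulPosMono (Ω →ₘ[P] ℝ) where
  mul_le_mul_of_nonneg_right c hc a b hab := by
    rw [le_mul_iff_ae]
    filter_upwards [coeFn_le.2 hab, nonneg_iff_ae.1 hc, coeFn_mul a c] with ω hab hc hac
    rw [hac]
    exact mul_le_mul_of_nonneg_right hab hc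

theorem le_mul_of_isGLB {c f g : Ω →ₘ[P] ℝ} {S : Set (Ω →ₘ[P] ℝ)} (hf : 0 ≤ f)
    (hS_nonneg : ∀ η ∈ S, 0 ≤ η) (hS_bound : ∀ η ∈ S, c ≤ η * f) (hS : S.Nonempty)
    (hg : IsGLB S g) : c ≤ g * f := by
  have hmeas : Measurable fun ω => c ω / f ω :=
    c.stronglyMeasurable.measurable.div f.stronglyMeasurable.measurable
  set θ : Ω →ₘ[P] ℝ := mk _ hmeas.aestronglyMeasurable
  -- where `f` vanishes, `c / f = 0` by the division-by-zero convention, and `0 ≤ η`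
  have hθ : θ ∈ lowerBounds S := fun η hη => by
    rw [← coeFn_le]
    filter_upwards [le_mul_iff_ae.1 (hS_bound η hη), nonneg_iff_ae.1 hf,
      nonneg_iff_ae.1 (hS_nonneg η hη), coeFn_mk _ hmeas.aestronglyMeasurable]
      with ω hc hf hη hθ
    rw [hθ]
    exact div_le_of_le_mul₀ hf hη hc
  obtain ⟨η, hη⟩ := hS
  rw [le_mul_iff_ae]
  filter_upwards [coeFn_le.2 (hg.2 hθ), le_mul_iff_ae.1 (hS_bound η hη), nonneg_iff_ae.1 hf,
    coeFn_mk _ hmeas.aestronglyMeasurable] with ω hθg hc hf hθ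
  rcases hf.eq_or_lt with hf0 | hfpos
  · rw [← hf0, mul_zero] at hc ⊢
    exact hc
  · rw [hθ, div_le_iff₀ hfpos] at hθg
    exact hθg

end MeasureTheory.AEEqFun

namespace RNModuleStr

variable {Ω : Type*} [MeasurableSpace Ω] {P : Measure Ω} {X : Type*} [AddCommGroup X]
  (M : RNModuleStr P X)

open AEEqFun Topology

theorem zero_smul' (x : X) : M.smul 0 x = 0 :=
  (AddMonoidHom.mk' (M.smul · x) (M.add_smul' · · x)).map_zero

theorem nrm_zero : M.nrm 0 = 0 := by
  have h := M.nrm_smul 0 0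
  rw [M.zero_smul'] at h
  rw [h]
  refine AEEqFun.ext ?_
  filter_upwards [coeFn_mul |0| (M.nrm 0), coeFn_abs (0 : Ω →ₘ[P] ℝ),
    coeFn_zero (β := ℝ) (μ := P)] with ω hmul habs h0
  rw [hmul, Pi.mul_apply, habs, h0, Pi.zero_apply, abs_zero, zero_mul]

theorem nrm_rsmul_ae (c : ℝ) (x : X) : ∀ᵐ ω ∂P, M.nrm (M.rsmul c x) ω = |c| * M.nrm x ω := by
  filter_upwards [coeFn_mul |const Ω c| (M.nrm x), coeFn_abs (const Ω c),
    coeFn_const Ω c (μ := P)] with ω hmul habs hc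
  rw [rsmul, M.nrm_smul, hmul, Pi.mul_apply, habs, hc, Function.const_apply]

theorem nrm_sum_le_ae {ι : Type*} (s : Finset ι) (f : ι → X) :
    ∀ᵐ ω ∂P, M.nrm (∑ i ∈ s, f i) ω ≤ ∑ i ∈ s, M.nrm (f i) ω := by
  classical
  induction s using Finset.induction_on with
  | empty =>
    filter_upwards [coeFn_zero (β := ℝ) (μ := P)] with ω h0
    rw [Finset.sum_empty, Finset.sum_empty, M.nrm_zero, h0, Pi.zero_apply]
  | insert i s hi ih =>
    filter_upwards [ih, coeFn_le.2 (M.nrm_add_le (f i) (∑ j ∈ s, f j)),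
      coeFn_add (M.nrm (f i)) (M.nrm (∑ j ∈ s, f j))] with ω ih htri hadd
    rw [hadd, Pi.add_apply] at htri
    rw [Finset.sum_insert hi, Finset.sum_insert hi]
    linarith

variable {M}

theorem TendstoRN.comp {ι κ : Type*} {f : ι → X} {l : Filter ι} {x : X} (h : M.TendstoRN f l x)
    {g : κ → ι} {l' : Filter κ} (hg : Tendsto g l' l) : M.TendstoRN (f ∘ g) l' x :=
  fun ε hε => (h ε hε).comp hg

theorem TendstoRN.tendstoInMeasure_nrm {ι : Type*} {f : ι → X} {l : Filter ι} {x : X}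
    (h : M.TendstoRN f l x) : TendstoInMeasure P (fun i => ⇑(M.nrm (f i - x))) l 0 := by
  rw [tendstoInMeasure_iff_norm]
  refine fun ε hε => (h ε hε).congr fun i => measure_congr ?_
  filter_upwards [nonneg_iff_ae.1 (M.nrm_nonneg (f i - x))] with ω hω
  change (ε ≤ _) = (ε ≤ |_ - 0|)
  rw [sub_zero, abs_of_nonneg hω]

theorem le_mul_nrm_of_tendstoRN {y : ℕ → X} {x : X} (hy : M.TendstoRN y atTop x)
    {a η : Ω →ₘ[P] ℝ} (hη : 0 ≤ η) (h : ∀ n, a ≤ η * M.nrm (y n)) : a ≤ η * M.nrm x := by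
  obtain ⟨ns, -, hns⟩ := hy.tendstoInMeasure_nrm.exists_seq_tendsto_ae
  have htri : ∀ n, ∀ᵐ ω ∂P, M.nrm (y n) ω ≤ M.nrm x ω + M.nrm (y n - x) ω := fun n => by
    filter_upwards [coeFn_le.2 (M.nrm_add_le x (y n - x)),
      coeFn_add (M.nrm x) (M.nrm (y n - x))] with ω htri hadd
    rwa [add_sub_cancel, hadd] at htri
  rw [le_mul_iff_ae]
  filter_upwards [ae_all_iff.2 fun n => le_mul_iff_ae.1 (h n), ae_all_iff.2 htri,
    nonneg_iff_ae.1 hη, hns] with ω ha htri hη hlim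
  have hlim' : Tendsto (fun k => η ω * (M.nrm x ω + M.nrm (y (ns k) - x) ω)) atTop
      (𝓝 (η ω * M.nrm x ω)) := by
    simpa using (hlim.const_add (M.nrm x ω)).const_mul (η ω)
  exact ge_of_tendsto' hlim' fun k => (ha (ns k)).trans (mul_le_mul_of_nonneg_left (htri _) hη)

theorem IsModuleHom.map_sub {Y : Type*} [AddCommGroup Y] {N : RNModuleStr P Y} {T : X → Y}
    (hT : M.IsModuleHom N T) (x y : X) : T (x - y) = T x - T y :=
  (AddMonoidHom.mk' T hT.1).map_sub x y

variable (M) in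
/-- The paper's `A_s z`. -/
def diffQuotient (V : ℝ → X → X) (C : X → X) (s : ℝ) (z : X) : X :=
  M.rsmul s⁻¹ (V s z - C z)

variable {V : ℝ → X → X} {C : X → X}

theorem IsCSemigroup.C_sub_eq_sum (hV : M.IsCSemigroup V C) (z : X) {h : ℝ} (hh : 0 ≤ h)
    (m : ℕ) : C (V (m * h) z - C z) = ∑ i ∈ Finset.range m, V (i * h) (V h z - C z) := by
  have hstep : ∀ i : ℕ, V (i * h) (V h z - C z) = C (V ((i + 1 : ℕ) * h) z) - C (V (i * h) z) :=
    fun i => by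
      have hi : 0 ≤ (i : ℝ) * h := by positivity
      have hC : V (i * h) (C z) = C (V (i * h) z) := by
        simpa [hV.V_zero] using (hV.C_V _ 0 hi le_rfl z).symm
      rw [(hV.V_hom _ hi).map_sub, hC, show ((i + 1 : ℕ) : ℝ) * h = i * h + h by push_cast; ring,
        hV.C_V _ _ hi hh]
  rw [Finset.sum_congr rfl fun i _ => hstep i,
    Finset.sum_range_sub (fun i : ℕ => C (V (i * h) z)), hV.C_hom.map_sub, Nat.cast_zero,
    zero_mul, hV.V_zero]

theorem IsCSemigroup.nrm_C_diffQuotient_le (hV : M.IsCSemigroup V C) (z : X) {h : ℝ}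
    (hh : 0 < h) {m : ℕ} (hm : 0 < m) {η : Ω →ₘ[P] ℝ}
    (hb : ∀ t ∈ Icc 0 (m * h), ∀ x, M.nrm (V t x) ≤ η * M.nrm x) :
    M.nrm (C (M.diffQuotient V C (m * h) z)) ≤ η * M.nrm (M.diffQuotient V C h z) := by
  set w := V h z - C z
  have hC : C (M.diffQuotient V C (m * h) z)
      = M.rsmul (m * h)⁻¹ (∑ i ∈ Finset.range m, V (i * h) w) := by
    rw [diffQuotient, rsmul, hV.C_hom.2, hV.C_sub_eq_sum z hh.le]
    rfl
  have hterm : ∀ i ∈ Finset.range m, ∀ᵐ ω ∂P, M.nrm (V (i * h) w) ω ≤ η ω * M.nrm w ω :=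
    fun i hi => le_mul_iff_ae.1 <| hb _ ⟨by positivity, by
      gcongr; exact_mod_cast (Finset.mem_range.1 hi).le⟩ w
  rw [hC, le_mul_iff_ae]
  filter_upwards [M.nrm_rsmul_ae (m * h)⁻¹ (∑ i ∈ Finset.range m, V (i * h) w),
    M.nrm_rsmul_ae h⁻¹ w, M.nrm_sum_le_ae (Finset.range m) fun i => V (i * h) w,
    (eventually_all_finset _).2 hterm] with ω hl hr hsum hterm
  have hm' : (0 : ℝ) < m := by exact_mod_cast hm
  rw [hl, diffQuotient, hr, abs_of_pos (by positivity), abs_of_pos (by positivity)]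
  calc (m * h)⁻¹ * M.nrm (∑ i ∈ Finset.range m, V (i * h) w) ω
      ≤ (m * h)⁻¹ * (m * (η ω * M.nrm w ω)) := by
        gcongr
        simpa using hsum.trans (Finset.sum_le_card_nsmul _ _ _ hterm)
    _ = η ω * (h⁻¹ * M.nrm w ω) := by field_simp

theorem IsCSemigroup.nrm_C_diffQuotient_le_mul_nrm_C_generator (hV : M.IsCSemigroup V C)
    {DA : Set X} {A : X → X} (hA : M.IsGenerator V C DA A) {z : X} (hz : z ∈ DA) {s : ℝ}
    (hs : 0 < s) {η : Ω →ₘ[P] ℝ} (hη : 0 ≤ η)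
    (hb : ∀ t ∈ Icc 0 s, ∀ x, M.nrm (V t x) ≤ η * M.nrm x) :
    M.nrm (C (M.diffQuotient V C s z)) ≤ η * M.nrm (C (A z)) := by
  have hseq : Tendsto (fun n : ℕ => s / (n + 1 : ℕ)) atTop (𝓝[>] 0) :=
    tendsto_nhdsWithin_iff.2 ⟨(tendsto_const_div_atTop_nhds_zero_nat s).comp
      (tendsto_add_atTop_nat 1), Eventually.of_forall fun n => mem_Ioi.2 (by positivity)⟩
  refine le_mul_nrm_of_tendstoRN ((hA.spec z hz).comp hseq) hη fun n => ?_
  have hs' : ((n + 1 : ℕ) : ℝ) * (s / (n + 1 : ℕ)) = s := mul_div_cancel₀ _ (by positivity)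
  have hbound := hV.nrm_C_diffQuotient_le z (h := s / (n + 1 : ℕ)) (by positivity) n.succ_pos
    (by rwa [hs'])
  rwa [hs'] at hbound

end RNModuleStr

theorem stmt5_general {Ω : Type*} [MeasurableSpace Ω] (P : Measure Ω)
    {X : Type*} [AddCommGroup X] (M : RNModuleStr P X)
    (V : ℝ → X → X) (C : X → X) (DA : Set X) (A : X → X)
    (hV : IsCSemigroup M V C) (hloc : M.LocASBounded V)
    (hA : IsGenerator M V C DA A) (z : X) (hz : z ∈ DA) :
    (∀ l : ℝ, 0 < l → BddAbove {g : Ω →ₘ[P] ℝ | ∃ s ∈ Ioc (0:ℝ) l,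
        g = M.nrm (C (M.rsmul s⁻¹ (V s z - C z)))}) ∧
    (∀ s : ℝ, 0 < s → ∀ (opN : ℝ → (Ω →ₘ[P] ℝ)) (W : Ω →ₘ[P] ℝ),
      (∀ t ∈ Icc (0:ℝ) (2*s),
        IsGLB {η : Ω →ₘ[P] ℝ | 0 ≤ η ∧ ∀ x : X, M.nrm (V t x) ≤ η * M.nrm x} (opN t)) →
      IsLUB (opN '' Icc (0:ℝ) (2*s)) W →
      M.nrm (C (M.rsmul s⁻¹ (V s z - C z))) ≤ W * M.nrm (C (A z))) := by
  refine ⟨fun l hl => ?_, fun s hs opN W hopN hW => ?_⟩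
  · obtain ⟨η, hη, hb⟩ := hloc l hl
    refine ⟨η * M.nrm (C (A z)), ?_⟩
    rintro _ ⟨s, hs, rfl⟩
    exact hV.nrm_C_diffQuotient_le_mul_nrm_C_generator hA hz hs.1 hη
      fun t ht => hb t ⟨ht.1, ht.2.trans hs.2⟩
  · have h0 : (0 : ℝ) ∈ Icc 0 (2 * s) := ⟨le_rfl, by positivity⟩
    have hopN_bound : ∀ t ∈ Icc 0 (2 * s), ∀ x, M.nrm (V t x) ≤ opN t * M.nrm x :=
      fun t ht x => AEEqFun.le_mul_of_isGLB (M.nrm_nonneg x) (fun _ hη => hη.1)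
        (fun _ hη => hη.2 x) (hV.V_bdd t ht.1) (hopN t ht)
    have hW_nonneg : 0 ≤ W :=
      ((hopN 0 h0).2 fun _ hη => hη.1).trans (hW.1 ⟨0, h0, rfl⟩)
    refine hV.nrm_C_diffQuotient_le_mul_nrm_C_generator hA hz hs hW_nonneg fun t ht x => ?_
    have ht' : t ∈ Icc 0 (2 * s) := ⟨ht.1, by linarith [ht.2]⟩
    exact (hopN_bound t ht' x).trans
      (mul_le_mul_of_nonneg_right (hW.1 ⟨t, ht', rfl⟩) (M.nrm_nonneg x))

/-- for a locally a.s. bounded `C`-semigroup with generator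
`(A,D(A))` and `z ∈ D(A)`: (i) for every `l > 0`, `⋁_{s∈(0,l]} ‖C A_s z‖ ∈ L⁰₊`
(the set is bounded above in `L⁰`); (ii) `‖C A_s z‖ ≤ (⋁_{t∈[0,2s]}‖V(t)‖)·‖CAz‖`
for every `s > 0`, where `A_s = (V(s) - C)/s`. -/
theorem stmt5 {Ω : Type*} [MeasurableSpace Ω] (P : Measure Ω) [IsProbabilityMeasure P]
    {X : Type*} [AddCommGroup X] (M : RNModuleStr P X)
    (V : ℝ → X → X) (C : X → X) (DA : Set X) (A : X → X)
    (hV : IsCSemigroup M V C) (hloc : M.LocASBounded V)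
    (hA : IsGenerator M V C DA A) (z : X) (hz : z ∈ DA) :
    (∀ l : ℝ, 0 < l → BddAbove {g : Ω →ₘ[P] ℝ | ∃ s ∈ Ioc (0:ℝ) l,
        g = M.nrm (C (M.rsmul s⁻¹ (V s z - C z)))}) ∧
    (∀ s : ℝ, 0 < s → ∀ (opN : ℝ → (Ω →ₘ[P] ℝ)) (W : Ω →ₘ[P] ℝ),
      (∀ t ∈ Icc (0:ℝ) (2*s),
        IsGLB {η : Ω →ₘ[P] ℝ | 0 ≤ η ∧ ∀ x : X, M.nrm (V t x) ≤ η * M.nrm x} (opN t)) →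
      IsLUB (opN '' Icc (0:ℝ) (2*s)) W →
      M.nrm (C (M.rsmul s⁻¹ (V s z - C z))) ≤ W * M.nrm (C (A z))) :=
  stmt5_general P M V C DA A hV hloc hA z hz
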